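/- There is no constant Ψ ≥ 1 such that for every binary-labeled dataset D over {0,1}^d and every finite candidate rule family 𝒦 of conjunctions, Ψ times the 0-1 loss of the 0-1-loss-optimal rule set is at least the 0-1 loss of the Hamming-loss-optimal rule set. Concretely, for each even d ≥ 6 there is a dataset and rule family on which the 0-1-optimal rule set has 0-1 loss 2 while every Hamming-loss-optimal rule set has 0-1 loss binom(d-2, d/2). -/

import Mathlib

/-- A point `x ∈ {0,1}^d` satisfies rule `S` if `x j = 1` for all `j ∈ S`. -/
def Satisfies {d : ℕ} (x : Fin d → Bool) (S : Finset (Fin d)) : Prop :=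
  ∀ j ∈ S, x j = true

instance {d : ℕ} (x : Fin d → Bool) (S : Finset (Fin d)) : Decidable (Satisfies x S) :=
  inferInstanceAs (Decidable (∀ j ∈ S, x j = true))

/-- 0-1 loss of a rule set `K` on positive points `P` and negative points `N`. -/
def Loss01 {d : ℕ} (P N : Finset (Fin d → Bool)) (K : Finset (Finset (Fin d))) : ℕ :=
  (P.filter (fun x => ∀ S ∈ K, ¬ Satisfies x S)).card
    + (N.filter (fun x => ∃ S ∈ K, Satisfies x S)).card

/-- Hamming loss of a rule set `K`: uncovered positives plus, for each negative point,
the number of rules of `K` it satisfies. -/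
def LossH {d : ℕ} (P N : Finset (Fin d → Bool)) (K : Finset (Finset (Fin d))) : ℕ :=
  (P.filter (fun x => ∀ S ∈ K, ¬ Satisfies x S)).card
    + ∑ x ∈ N, (K.filter (fun S => Satisfies x S)).card

namespace Stmt4Aux

def χ {d : ℕ} (T : Finset (Fin d)) : Fin d → Bool := fun j => decide (j ∈ T)

lemma satisfies_chi {d : ℕ} {T S : Finset (Fin d)} : Satisfies (χ T) S ↔ S ⊆ T := by
  simp [Satisfies, χ, Finset.subset_iff]

lemma chi_inj {d : ℕ} : Function.Injective (χ (d := d)) := by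
  intro a b h
  ext j
  have := congrFun h j
  simpa [χ] using this

lemma choose_lb : ∀ k n : ℕ, 1 ≤ k → k ≤ n → n + 1 - k ≤ n.choose k := by
  intro k
  induction k with
  | zero => omega
  | succ k ih =>
    intro n h1 h2
    by_cases hk : k = 0
    · subst hk
      simpa using Nat.le_refl n
    · obtain ⟨m, rfl⟩ : ∃ m, n = m + 1 := ⟨n - 1, by omega⟩
      have h := ih m (by omega) (by omega)
      calc m + 1 + 1 - (k + 1) = m + 1 - k := by omega
        _ ≤ Nat.choose m k := h
        _ ≤ Nat.choose (m + 1) (k + 1) := by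
            rw [Nat.choose_succ_succ]; omega




lemma key (d : ℕ) (hd : 6 ≤ d) (hde : Even d) :
    ∃ (P N : Finset (Fin d → Bool)) (𝒦 : Finset (Finset (Fin d))),
      (∃ Kopt ⊆ 𝒦, ∀ K ⊆ 𝒦, Loss01 P N Kopt ≤ Loss01 P N K) ∧
      (∃ Kham ⊆ 𝒦, ∀ K ⊆ 𝒦, LossH P N Kham ≤ LossH P N K) ∧
      (∀ Kopt ⊆ 𝒦, (∀ K ⊆ 𝒦, Loss01 P N Kopt ≤ Loss01 P N K) →
        Loss01 P N Kopt = 2) ∧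
      (∀ Kham ⊆ 𝒦, (∀ K ⊆ 𝒦, LossH P N Kham ≤ LossH P N K) →
        Loss01 P N Kham = Nat.choose (d - 2) (d / 2)) := by
  have hc2 : d / 2 * 2 = d := Nat.div_mul_cancel hde.two_dvd
  set m : ℕ := Nat.choose (d - 2) (d / 2) with hmdef
  -- basic indices
  set z : Fin d := ⟨0, by omega⟩ with hzdef
  set o : Fin d := ⟨1, by omega⟩ with hodef
  have hzo : z ≠ o := by simp [hzdef, hodef, Fin.ext_iff]
  -- the coordinate set R
  set R : Finset (Fin d) := Finset.univ.filter (fun j : Fin d => 2 ≤ j.val) with hRdef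
  have hmemR : ∀ j : Fin d, j ∈ R ↔ 2 ≤ j.val := by
    intro j; simp [hRdef]
  have hzR : z ∉ R := by simp [hmemR, hzdef]
  have hoR : o ∉ R := by simp [hmemR, hodef]
  have hRcard : R.card = d - 2 := by
    have h1 : (Finset.univ.filter (fun j : Fin d => ¬ 2 ≤ j.val)) = {z, o} := by
      ext j
      simp only [Finset.mem_filter, Finset.mem_univ, true_and, Finset.mem_insert,
        Finset.mem_singleton, Fin.ext_iff, hzdef, hodef, Fin.val_mk]
      omega
    have h2 := Finset.card_filter_add_card_filter_not
      (s := (Finset.univ : Finset (Fin d))) (p := fun j : Fin d => 2 ≤ j.val)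
    have h3 : ({z, o} : Finset (Fin d)).card = 2 := by
      rw [Finset.card_insert_of_notMem (by simp [hzo]), Finset.card_singleton]
    rw [h1, h3] at h2
    simp only [Finset.card_univ, Fintype.card_fin] at h2
    rw [hRdef]
    omega
  -- the rule families
  set 𝒜 : Finset (Finset (Fin d)) := R.powersetCard (d / 2) with h𝒜def
  have hmem𝒜 : ∀ S, S ∈ 𝒜 ↔ S ⊆ R ∧ S.card = d / 2 := by
    intro S; simp [h𝒜def, Finset.mem_powersetCard]
  have h𝒜card : 𝒜.card = m := by
    rw [h𝒜def, Finset.card_powersetCard, hRcard]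
  set B : Finset (Fin d) := {z} with hBdef
  have hB𝒜 : B ∉ 𝒜 := by
    intro h
    have := (hmem𝒜 B).1 h
    have hz' : z ∈ R := this.1 (by simp [hBdef])
    exact hzR hz'
  set 𝒦 : Finset (Finset (Fin d)) := insert B 𝒜 with h𝒦def
  -- mapping sets to points
  set f : Finset (Fin d) → (Fin d → Bool) := fun S => χ (insert z S) with hfdef
  have hfinj : ∀ S S', z ∉ S → z ∉ S' → f S = f S' → S = S' := by
    intro S S' hS hS' h
    have h2 : insert z S = insert z S' := chi_inj h
    have := congrArg (Finset.erase · z) h2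
    simpa [Finset.erase_insert, hS, hS'] using this
  -- positives
  set P : Finset (Fin d → Bool) := 𝒜.image f with hPdef
  -- negative sets: pick m subsets of R of size d/2 - 1
  have hchoose_le : m ≤ (R.powersetCard (d / 2 - 1)).card := by
    rw [Finset.card_powersetCard, hRcard]
    have h1 : (d - 2) / 2 = d / 2 - 1 := by omega
    calc m ≤ (d - 2).choose ((d - 2) / 2) := Nat.choose_le_middle _ _
      _ = (d - 2).choose (d / 2 - 1) := by rw [h1]
  obtain ⟨𝒮, h𝒮sub, h𝒮card⟩ := Finset.exists_subset_card_eq hchoose_le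
  have hmem𝒮 : ∀ S ∈ 𝒮, S ⊆ R ∧ S.card = d / 2 - 1 := by
    intro S hS
    have := h𝒮sub hS
    simpa [Finset.mem_powersetCard] using this
  set n1 : Fin d → Bool := χ R with hn1def
  set n2 : Fin d → Bool := χ (insert o R) with hn2def
  set NB : Finset (Fin d → Bool) := 𝒮.image f with hNBdef
  set N : Finset (Fin d → Bool) := insert n1 (insert n2 NB) with hNdef
  -- basic size facts
  have hm2 : 2 ≤ m := by
    have := choose_lb (d / 2) (d - 2) (by omega) (by omega)
    omega
  -- distinctness facts
  have hn12 : n1 ≠ n2 := by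
    intro h
    have := chi_inj h
    exact hoR (this ▸ Finset.mem_insert_self o R)
  have hn1NB : n1 ∉ NB := by
    simp only [hNBdef, Finset.mem_image, not_exists]
    rintro S ⟨hS, h⟩
    have := congrFun h z
    simp [hfdef, hn1def, χ, hzR] at this
  have hn2NB : n2 ∉ NB := by
    simp only [hNBdef, Finset.mem_image, not_exists]
    rintro S ⟨hS, h⟩
    have := congrFun h z
    simp [hfdef, hn2def, χ, hzR, hzo] at this
  have hNBcard : NB.card = m := by
    rw [hNBdef, Finset.card_image_of_injOn, h𝒮card]
    intro S hS S' hS' h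
    exact hfinj S S' (fun hz => hzR ((hmem𝒮 S hS).1 hz))
      (fun hz => hzR ((hmem𝒮 S' hS').1 hz)) h
  -- satisfaction facts
  have hsatPB : ∀ S, Satisfies (f S) B := by
    intro S
    rw [hfdef, satisfies_chi]
    simp [hBdef]
  have hsatPA : ∀ S ∈ 𝒜, ∀ T ∈ 𝒜, (Satisfies (f S) T ↔ T = S) := by
    intro S hS T hT
    obtain ⟨hSR, hScard⟩ := (hmem𝒜 S).1 hS
    obtain ⟨hTR, hTcard⟩ := (hmem𝒜 T).1 hT
    rw [hfdef, satisfies_chi]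
    constructor
    · intro h
      have hTS : T ⊆ S := by
        intro j hj
        rcases Finset.mem_insert.1 (h hj) with rfl | hj'
        · exact absurd (hTR hj) hzR
        · exact hj'
      exact Finset.eq_of_subset_of_card_le hTS (by omega)
    · rintro rfl
      exact (Finset.subset_insert _ _)
  have hsatn1 : ∀ T ∈ 𝒜, Satisfies n1 T := by
    intro T hT
    rw [hn1def, satisfies_chi]
    exact ((hmem𝒜 T).1 hT).1
  have hsatn2 : ∀ T ∈ 𝒜, Satisfies n2 T := by
    intro T hT
    rw [hn2def, satisfies_chi]
    exact ((hmem𝒜 T).1 hT).1.trans (Finset.subset_insert _ _)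
  have hsatn1B : ¬ Satisfies n1 B := by
    rw [hn1def, satisfies_chi, hBdef]
    simp [hzR]
  have hsatn2B : ¬ Satisfies n2 B := by
    rw [hn2def, satisfies_chi, hBdef]
    simp [hzR, hzo]
  have hsatNBB : ∀ S, Satisfies (f S) B := hsatPB
  have hsatNBA : ∀ S ∈ 𝒮, ∀ T ∈ 𝒜, ¬ Satisfies (f S) T := by
    intro S hS T hT h
    obtain ⟨hSR, hScard⟩ := hmem𝒮 S hS
    obtain ⟨hTR, hTcard⟩ := (hmem𝒜 T).1 hT
    rw [hfdef, satisfies_chi] at h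
    have hTS : T ⊆ S := by
      intro j hj
      rcases Finset.mem_insert.1 (h hj) with rfl | hj'
      · exact absurd (hTR hj) hzR
      · exact hj'
    have := Finset.card_le_card hTS
    omega
  -- the counting formulas
  have ht_le : ∀ K : Finset (Finset (Fin d)), (K ∩ 𝒜).card ≤ m := fun K =>
    h𝒜card ▸ Finset.card_le_card (Finset.inter_subset_right)
  have hPcard : ∀ K ⊆ 𝒦,
      (P.filter (fun x => ∀ S ∈ K, ¬ Satisfies x S)).card
        = if B ∈ K then 0 else m - (K ∩ 𝒜).card := by
    intro K hK
    by_cases hB : B ∈ K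
    · simp only [hB, if_true, Finset.card_eq_zero]
      rw [Finset.filter_eq_empty_iff]
      intro x hx
      rw [hPdef, Finset.mem_image] at hx
      obtain ⟨S, hS, rfl⟩ := hx
      push_neg
      exact ⟨B, hB, hsatPB S⟩
    · simp only [hB, if_false]
      rw [hPdef, Finset.filter_image]
      have heq : (𝒜.filter fun S => ∀ T ∈ K, ¬ Satisfies (f S) T)
          = 𝒜.filter (fun S => S ∉ K) := by
        apply Finset.filter_congr
        intro S hS
        constructor
        · intro h hSK
          exact h S hSK ((hsatPA S hS S hS).2 rfl)
        · intro hSK T hTK hsat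
          rcases Finset.mem_insert.1 (hK hTK) with rfl | hT𝒜
          · exact hB hTK
          · exact hSK (((hsatPA S hS T hT𝒜).1 hsat) ▸ hTK)
      rw [heq, Finset.card_image_of_injOn]
      · have h2 := Finset.card_filter_add_card_filter_not
          (s := 𝒜) (p := fun S => S ∈ K)
        have h3 : 𝒜.filter (fun S => S ∈ K) = K ∩ 𝒜 := by
          rw [Finset.filter_mem_eq_inter, Finset.inter_comm]
        rw [h3] at h2
        have h4 : (𝒜.filter fun S => S ∉ K) = 𝒜.filter (fun S => ¬ S ∈ K) := rfl
        omega
      · intro S hS S' hS' h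
        have hS1 := (hmem𝒜 S).1 (Finset.mem_filter.1 hS).1
        have hS2 := (hmem𝒜 S').1 (Finset.mem_filter.1 hS').1
        exact hfinj S S' (fun hz => hzR (hS1.1 hz)) (fun hz => hzR (hS2.1 hz)) h
  have hq1 : ∀ K ⊆ 𝒦, ((∃ S ∈ K, Satisfies n1 S) ↔ 0 < (K ∩ 𝒜).card) := by
    intro K hK
    rw [Finset.card_pos]
    constructor
    · rintro ⟨S, hSK, hsat⟩
      rcases Finset.mem_insert.1 (hK hSK) with rfl | hS𝒜
      · exact absurd hsat hsatn1B
      · exact ⟨S, Finset.mem_inter.2 ⟨hSK, hS𝒜⟩⟩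
    · rintro ⟨S, hS⟩
      obtain ⟨hSK, hS𝒜⟩ := Finset.mem_inter.1 hS
      exact ⟨S, hSK, hsatn1 S hS𝒜⟩
  have hq2 : ∀ K ⊆ 𝒦, ((∃ S ∈ K, Satisfies n2 S) ↔ 0 < (K ∩ 𝒜).card) := by
    intro K hK
    rw [Finset.card_pos]
    constructor
    · rintro ⟨S, hSK, hsat⟩
      rcases Finset.mem_insert.1 (hK hSK) with rfl | hS𝒜
      · exact absurd hsat hsatn2B
      · exact ⟨S, Finset.mem_inter.2 ⟨hSK, hS𝒜⟩⟩
    · rintro ⟨S, hS⟩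
      obtain ⟨hSK, hS𝒜⟩ := Finset.mem_inter.1 hS
      exact ⟨S, hSK, hsatn2 S hS𝒜⟩
  have hqNB : ∀ K ⊆ 𝒦, ∀ S ∈ 𝒮, ((∃ T ∈ K, Satisfies (f S) T) ↔ B ∈ K) := by
    intro K hK S hS
    constructor
    · rintro ⟨T, hTK, hsat⟩
      rcases Finset.mem_insert.1 (hK hTK) with rfl | hT𝒜
      · exact hTK
      · exact absurd hsat (hsatNBA S hS T hT𝒜)
    · intro hB
      exact ⟨B, hB, hsatPB S⟩
  have hNBfilter : ∀ K ⊆ 𝒦,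
      (NB.filter (fun x => ∃ S ∈ K, Satisfies x S)).card = if B ∈ K then m else 0 := by
    intro K hK
    by_cases hB : B ∈ K
    · simp only [hB, if_true]
      rw [Finset.filter_true_of_mem, hNBcard]
      intro x hx
      rw [hNBdef, Finset.mem_image] at hx
      obtain ⟨S, hS, rfl⟩ := hx
      exact (hqNB K hK S hS).2 hB
    · simp only [hB, if_false, Finset.card_eq_zero]
      rw [Finset.filter_eq_empty_iff]
      intro x hx
      rw [hNBdef, Finset.mem_image] at hx
      obtain ⟨S, hS, rfl⟩ := hx
      intro h
      exact hB ((hqNB K hK S hS).1 h)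
  have hNcard : ∀ K ⊆ 𝒦,
      (N.filter (fun x => ∃ S ∈ K, Satisfies x S)).card
        = (if 0 < (K ∩ 𝒜).card then 2 else 0) + (if B ∈ K then m else 0) := by
    intro K hK
    rw [hNdef, Finset.filter_insert, Finset.filter_insert]
    by_cases ht : 0 < (K ∩ 𝒜).card
    · rw [if_pos ((hq1 K hK).2 ht), if_pos ((hq2 K hK).2 ht), if_pos ht]
      rw [Finset.card_insert_of_notMem, Finset.card_insert_of_notMem]
      · rw [hNBfilter K hK]; omega
      · intro h
        exact hn2NB (Finset.mem_filter.1 h).1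
      · intro h
        rcases Finset.mem_insert.1 h with h | h
        · exact hn12 h
        · exact hn1NB (Finset.mem_filter.1 h).1
    · rw [if_neg (fun h => ht ((hq1 K hK).1 h)), if_neg (fun h => ht ((hq2 K hK).1 h)),
        if_neg ht, hNBfilter K hK]
      simp
  have hHsum : ∀ K ⊆ 𝒦,
      (∑ x ∈ N, (K.filter (fun S => Satisfies x S)).card)
        = 2 * (K ∩ 𝒜).card + (if B ∈ K then m else 0) := by
    intro K hK
    have hfn1 : K.filter (fun S => Satisfies n1 S) = K ∩ 𝒜 := by
      ext T
      simp only [Finset.mem_filter, Finset.mem_inter]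
      constructor
      · rintro ⟨hTK, hsat⟩
        rcases Finset.mem_insert.1 (hK hTK) with rfl | hT𝒜
        · exact absurd hsat hsatn1B
        · exact ⟨hTK, hT𝒜⟩
      · rintro ⟨hTK, hT𝒜⟩
        exact ⟨hTK, hsatn1 T hT𝒜⟩
    have hfn2 : K.filter (fun S => Satisfies n2 S) = K ∩ 𝒜 := by
      ext T
      simp only [Finset.mem_filter, Finset.mem_inter]
      constructor
      · rintro ⟨hTK, hsat⟩
        rcases Finset.mem_insert.1 (hK hTK) with rfl | hT𝒜
        · exact absurd hsat hsatn2B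
        · exact ⟨hTK, hT𝒜⟩
      · rintro ⟨hTK, hT𝒜⟩
        exact ⟨hTK, hsatn2 T hT𝒜⟩
    have hfNB : ∀ S ∈ 𝒮, K.filter (fun T => Satisfies (f S) T) = K ∩ {B} := by
      intro S hS
      ext T
      simp only [Finset.mem_filter, Finset.mem_inter, Finset.mem_singleton]
      constructor
      · rintro ⟨hTK, hsat⟩
        rcases Finset.mem_insert.1 (hK hTK) with rfl | hT𝒜
        · exact ⟨hTK, rfl⟩
        · exact absurd hsat (hsatNBA S hS T hT𝒜)
      · rintro ⟨hTK, rfl⟩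
        exact ⟨hTK, hsatPB S⟩
    rw [hNdef, Finset.sum_insert, Finset.sum_insert hn2NB]
    · rw [hfn1, hfn2, hNBdef, Finset.sum_image]
      · have hsum : ∑ S ∈ 𝒮, (K.filter (fun T => Satisfies (f S) T)).card
            = ∑ S ∈ 𝒮, (K ∩ {B}).card := by
          apply Finset.sum_congr rfl
          intro S hS
          rw [hfNB S hS]
        rw [hsum, Finset.sum_const, h𝒮card]
        by_cases hB : B ∈ K
        · rw [if_pos hB, Finset.inter_singleton_of_mem hB]
          simp [two_mul]
          ring
        · rw [if_neg hB, Finset.inter_singleton_of_notMem hB]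
          simp [two_mul]
      · intro S hS S' hS' h
        exact hfinj S S' (fun hz => hzR ((hmem𝒮 S hS).1 hz))
          (fun hz => hzR ((hmem𝒮 S' hS').1 hz)) h
    · intro h
      rcases Finset.mem_insert.1 h with h | h
      · exact hn12 h
      · exact hn1NB h
  -- the loss formulas
  have hLoss01 : ∀ K ⊆ 𝒦, Loss01 P N K
      = (if B ∈ K then 0 else m - (K ∩ 𝒜).card)
        + ((if 0 < (K ∩ 𝒜).card then 2 else 0) + (if B ∈ K then m else 0)) := by
    intro K hK
    rw [Loss01, hPcard K hK, hNcard K hK]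
  have hLossH : ∀ K ⊆ 𝒦, LossH P N K
      = (if B ∈ K then 0 else m - (K ∩ 𝒜).card)
        + (2 * (K ∩ 𝒜).card + (if B ∈ K then m else 0)) := by
    intro K hK
    rw [LossH, hPcard K hK, hHsum K hK]
  -- evaluate on the two special rule sets
  have h𝒜sub : 𝒜 ⊆ 𝒦 := Finset.subset_insert _ _
  have h𝒜inter : (𝒜 ∩ 𝒜).card = m := by rw [Finset.inter_self, h𝒜card]
  have hLoss01𝒜 : Loss01 P N 𝒜 = 2 := by
    rw [hLoss01 𝒜 h𝒜sub, if_neg hB𝒜, if_neg hB𝒜, h𝒜inter, if_pos (by omega)]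
    omega
  have hLossHemp : LossH P N ∅ = m := by
    rw [hLossH ∅ (Finset.empty_subset _)]
    simp
  -- lower bounds
  have hLoss01_ge : ∀ K ⊆ 𝒦, 2 ≤ Loss01 P N K := by
    intro K hK
    rw [hLoss01 K hK]
    have := ht_le K
    by_cases hB : B ∈ K <;> by_cases ht : 0 < (K ∩ 𝒜).card <;>
      simp [hB, ht] <;> omega
  have hLossH_ge : ∀ K ⊆ 𝒦, m ≤ LossH P N K := by
    intro K hK
    rw [hLossH K hK]
    have := ht_le K
    by_cases hB : B ∈ K <;> simp [hB] <;> omega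
  refine ⟨P, N, 𝒦, ⟨𝒜, h𝒜sub, ?_⟩, ⟨∅, Finset.empty_subset _, ?_⟩, ?_, ?_⟩
  · intro K hK
    rw [hLoss01𝒜]
    exact hLoss01_ge K hK
  · intro K hK
    rw [hLossHemp]
    exact hLossH_ge K hK
  · intro Kopt hsub hopt
    have h1 := hopt 𝒜 h𝒜sub
    rw [hLoss01𝒜] at h1
    have h2 := hLoss01_ge Kopt hsub
    omega
  · intro Kham hsub hopt
    have h1 := hopt ∅ (Finset.empty_subset _)
    rw [hLossHemp] at h1
    have h2 := hLossH Kham hsub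
    have ht0 : (Kham ∩ 𝒜).card = 0 := by
      have := ht_le Kham
      by_cases hB : B ∈ Kham <;> simp [hB] at h2 <;> omega
    rw [hLoss01 Kham hsub, ht0]
    have := ht_le Kham
    by_cases hB : B ∈ Kham <;> simp [hB] <;> omega



end Stmt4Aux

theorem stmt4 :
    (¬ ∃ Ψ : ℝ, 1 ≤ Ψ ∧
      ∀ (d : ℕ) (P N : Finset (Fin d → Bool)) (𝒦 Kopt Kham : Finset (Finset (Fin d))),
        Kopt ⊆ 𝒦 → Kham ⊆ 𝒦 →
        (∀ K ⊆ 𝒦, Loss01 P N Kopt ≤ Loss01 P N K) →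
        (∀ K ⊆ 𝒦, LossH P N Kham ≤ LossH P N K) →
        (Loss01 P N Kham : ℝ) ≤ Ψ * (Loss01 P N Kopt : ℝ)) ∧
    (∀ d : ℕ, 6 ≤ d → Even d →
      ∃ (P N : Finset (Fin d → Bool)) (𝒦 : Finset (Finset (Fin d))),
        (∃ Kopt ⊆ 𝒦, ∀ K ⊆ 𝒦, Loss01 P N Kopt ≤ Loss01 P N K) ∧
        (∃ Kham ⊆ 𝒦, ∀ K ⊆ 𝒦, LossH P N Kham ≤ LossH P N K) ∧
        (∀ Kopt ⊆ 𝒦, (∀ K ⊆ 𝒦, Loss01 P N Kopt ≤ Loss01 P N K) →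
          Loss01 P N Kopt = 2) ∧
        (∀ Kham ⊆ 𝒦, (∀ K ⊆ 𝒦, LossH P N Kham ≤ LossH P N K) →
          Loss01 P N Kham = Nat.choose (d - 2) (d / 2))) := by
  constructor
  · rintro ⟨Ψ, hΨ1, h⟩
    set n : ℕ := ⌈Ψ⌉₊ with hndef
    set d : ℕ := 4 * n + 6 with hddef
    obtain ⟨P, N, 𝒦, ⟨Kopt, hKoptsub, hKopt⟩, ⟨Kham, hKhamsub, hKham⟩, hu1, hu2⟩ :=
      Stmt4Aux.key d (by omega) ⟨2 * n + 3, by omega⟩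
    have h1 : Loss01 P N Kopt = 2 := hu1 Kopt hKoptsub hKopt
    have h2 : Loss01 P N Kham = Nat.choose (d - 2) (d / 2) :=
      hu2 Kham hKhamsub hKham
    have h3 := h d P N 𝒦 Kopt Kham hKoptsub hKhamsub hKopt hKham
    rw [h1, h2] at h3
    have hd2 : d / 2 = 2 * n + 3 := by omega
    have hlb : 2 * n + 2 ≤ Nat.choose (d - 2) (d / 2) := by
      have := Stmt4Aux.choose_lb (d / 2) (d - 2) (by omega) (by omega)
      omega
    have hΨn : Ψ ≤ (n : ℝ) := Nat.le_ceil Ψ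
    have h4 : ((Nat.choose (d - 2) (d / 2) : ℕ) : ℝ) ≤ (n : ℝ) * 2 := by
      calc ((Nat.choose (d - 2) (d / 2) : ℕ) : ℝ) ≤ Ψ * 2 := h3
        _ ≤ (n : ℝ) * 2 := by nlinarith
    have h5 : Nat.choose (d - 2) (d / 2) ≤ n * 2 := by exact_mod_cast h4
    omega
  · intro d hd hde
    exact Stmt4Aux.key d hd hde
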